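/- arXiv:1809.02311 — 2 statements merged into one kernel-verified Lean document; each statement's English description precedes it below -/
import Mathlib

section
/- For any matrices M₁, M₂, M₃ ∈ SL(2,ℂ), the quantities a_j = Tr M_j (j=1,2,3), a_∞ = Tr(M₁M₂M₃), t₁₂ = Tr(M₁M₂), t₂₃ = Tr(M₂M₃), t₃₁ = Tr(M₃M₁) satisfy the Fricke cubic relation: t₁₂t₂₃t₃₁ + t₁₂² + t₂₃² + t₃₁² − (a₁a₂+a₃a_∞)t₁₂ − (a₂a₃+a₁a_∞)t₂₃ − (a₃a₁+a₂a_∞)t₃₁ + a₁² + a₂² + a₃² + a_∞² + a₁a₂a₃a_∞ − 4 = 0. -/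
/-!
The traces `x = Tr(M₁M₂M₃)` and `y = Tr(M₁M₃M₂)` have sum and product that are polynomials in
`a₁, a₂, a₃, t₁₂, t₂₃, t₃₁`, so `x` is a root of the quadratic `X² - (x + y) X + x y` written in
those variables; that quadratic evaluated at `a_∞` is the Fricke cubic.
-/

open Matrix

namespace Matrix

variable {R : Type*} [CommRing R] (A B C : Matrix (Fin 2) (Fin 2) R)

theorem trace_mul_mul_add_trace_mul_mul_swap :
    (A * B * C).trace + (A * C * B).trace =
      A.trace * (B * C).trace + B.trace * (C * A).trace + C.trace * (A * B).trace
        - A.trace * B.trace * C.trace := by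
  simp only [trace_fin_two, mul_apply, Fin.sum_univ_two]
  ring

/-- The determinant weights make both sides of degree two in each of `A`, `B`, `C`, which is why
the identity holds for all matrices and not only on `SL(2)`. -/
theorem trace_mul_mul_mul_trace_mul_mul_swap :
    (A * B * C).trace * (A * C * B).trace =
      (A * B).trace * (B * C).trace * (C * A).trace
        + C.det * (A * B).trace ^ 2 + A.det * (B * C).trace ^ 2 + B.det * (C * A).trace ^ 2
        - C.det * A.trace * B.trace * (A * B).trace - A.det * B.trace * C.trace * (B * C).trace
        - B.det * C.trace * A.trace * (C * A).trace
        + B.det * C.det * A.trace ^ 2 + C.det * A.det * B.trace ^ 2 + A.det * B.det * C.trace ^ 2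
        - 4 * A.det * B.det * C.det := by
  simp only [trace_fin_two, det_fin_two, mul_apply, Fin.sum_univ_two]
  ring

end Matrix

theorem stmt2 (M₁ M₂ M₃ : Matrix (Fin 2) (Fin 2) ℂ)
    (h₁ : M₁.det = 1) (h₂ : M₂.det = 1) (h₃ : M₃.det = 1)
    (a₁ a₂ a₃ a_inf t₁₂ t₂₃ t₃₁ : ℂ)
    (ha₁ : a₁ = M₁.trace) (ha₂ : a₂ = M₂.trace) (ha₃ : a₃ = M₃.trace)
    (hainf : a_inf = (M₁ * M₂ * M₃).trace)
    (ht₁₂ : t₁₂ = (M₁ * M₂).trace) (ht₂₃ : t₂₃ = (M₂ * M₃).trace)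
    (ht₃₁ : t₃₁ = (M₃ * M₁).trace) :
    t₁₂ * t₂₃ * t₃₁ + t₁₂ ^ 2 + t₂₃ ^ 2 + t₃₁ ^ 2
      - (a₁ * a₂ + a₃ * a_inf) * t₁₂ - (a₂ * a₃ + a₁ * a_inf) * t₂₃
      - (a₃ * a₁ + a₂ * a_inf) * t₃₁
      + a₁ ^ 2 + a₂ ^ 2 + a₃ ^ 2 + a_inf ^ 2 + a₁ * a₂ * a₃ * a_inf - 4 = 0 := by
  have hsum := trace_mul_mul_add_trace_mul_mul_swap M₁ M₂ M₃
  have hprod := trace_mul_mul_mul_trace_mul_mul_swap M₁ M₂ M₃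
  rw [h₁, h₂, h₃] at hprod
  subst ha₁ ha₂ ha₃ hainf ht₁₂ ht₂₃ ht₃₁
  linear_combination (M₁ * M₂ * M₃).trace * hsum - hprod
end

section
/- If a function y has a Laurent expansion y(x) = c₋₁(x−a)⁻¹ + c₀ + O(x−a) near x = a with c₋₁ ≠ 0 and y satisfies the sixth Painlevé equation with parameters α₀ = 2(δ−1/2)², β₀ = −2α₁², γ₀ = 2α₃², δ₀ = −2(α₂²−1/4), where δ ≠ 1/2 and a ∉ {0,1}, then c₋₁ = σ·a(a−1)/(2(δ−1/2)) for some σ ∈ {1,−1}. -/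
/-!
Multiply the equation by `(x - a)³` and let `x → a`. With `y ~ c/(x - a)`, `y' ~ -c/(x - a)²` and
`y'' ~ 2c/(x - a)³`, the left side tends to `2c`, while on the right only the three terms `(y')²/(2(y - ·))`
and the term `α₀ y³/(x²(x - 1)²)` survive, giving `3c/2 + α₀ c³/(a²(a - 1)²)`.
Hence `2 α₀ c² = a²(a - 1)²`, and `α₀ = 2(δ - 1/2)²` leaves the two signs.
-/

open Complex Filter Topology

section SimplePole

variable {a c : ℂ}

theorem hasDerivAt_div_sub_pow (c : ℂ) (n : ℕ) {x : ℂ} (hx : x ≠ a) :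
    HasDerivAt (fun z => c / (z - a) ^ n) (-(n * c) / (x - a) ^ (n + 1)) x := by
  have hxa : x - a ≠ 0 := sub_ne_zero.mpr hx
  refine ((hasDerivAt_const x c).fun_div (((hasDerivAt_id x).sub_const a).fun_pow n)
    (pow_ne_zero n hxa)).congr_deriv ?_
  rcases n with _ | n
  · simp
  · simp only [id, Nat.add_sub_cancel]
    field_simp
    ring

theorem deriv_div_sub_pow_add_eventuallyEq (c : ℂ) (n : ℕ) {h : ℂ → ℂ}
    (hh : AnalyticAt ℂ h a) :
    deriv (fun z => c / (z - a) ^ n + h z) =ᶠ[𝓝[≠] a]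
      fun z => -(n * c) / (z - a) ^ (n + 1) + deriv h z := by
  filter_upwards [self_mem_nhdsWithin, nhdsWithin_le_nhds hh.eventually_analyticAt]
    with x hxa hx
  exact ((hasDerivAt_div_sub_pow c n hxa).add hx.differentiableAt.hasDerivAt).deriv

theorem tendsto_sub_pow_mul_div_sub_pow_add {n : ℕ} (hn : n ≠ 0) {g : ℂ → ℂ}
    (hg : ContinuousAt g a) :
    Tendsto (fun x => (x - a) ^ n * (c / (x - a) ^ n + g x)) (𝓝[≠] a) (𝓝 c) := by
  have hlim : Tendsto (fun x => c + (x - a) ^ n * g x) (𝓝[≠] a)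
      (𝓝 (c + (a - a) ^ n * g a)) :=
    (tendsto_const_nhds.add (((continuousAt_id.sub continuousAt_const).pow n).mul hg)).mono_left
      nhdsWithin_le_nhds
  rw [sub_self, zero_pow hn, zero_mul, add_zero] at hlim
  refine hlim.congr' ?_
  filter_upwards [self_mem_nhdsWithin] with x hx
  have : (x - a) ^ n ≠ 0 := pow_ne_zero n (sub_ne_zero.mpr hx)
  field_simp

end SimplePole

section PainleveSix

variable (α₀ β₀ γ₀ δ₀ : ℂ)

noncomputable def painleveSixRHS (x y y' : ℂ) : ℂ :=
  (1 / 2) * (1 / y + 1 / (y - 1) + 1 / (y - x)) * y' ^ 2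
    - (1 / x + 1 / (x - 1) + 1 / (y - x)) * y'
    + (y * (y - 1) * (y - x)) / (x ^ 2 * (x - 1) ^ 2) *
      (α₀ + β₀ * x / y ^ 2 + γ₀ * (x - 1) / (y - 1) ^ 2 + δ₀ * (x * (x - 1)) / (y - x) ^ 2)

/-- `t³ · painleveSixRHS x y y'` written in the variables `t = x - a`, `Y = t y`, `V = t² y'`,
which stay bounded at a simple pole `x = a`. -/
noncomputable def painleveSixRescaledRHS (t x Y V : ℂ) : ℂ :=
  (1 / 2) * (V ^ 2 / Y + V ^ 2 / (Y - t) + V ^ 2 / (Y - t * x))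
    - (t * V / x + t * V / (x - 1) + t ^ 2 * V / (Y - t * x))
    + Y * (Y - t) * (Y - t * x) / (x ^ 2 * (x - 1) ^ 2) *
      (α₀ + β₀ * x * t ^ 2 / Y ^ 2 + γ₀ * (x - 1) * t ^ 2 / (Y - t) ^ 2
        + δ₀ * (x * (x - 1)) * t ^ 2 / (Y - t * x) ^ 2)

theorem painleveSixRescaledRHS_mul {t : ℂ} (ht : t ≠ 0) (x y y' : ℂ) :
    painleveSixRescaledRHS α₀ β₀ γ₀ δ₀ t x (t * y) (t ^ 2 * y') =
      t ^ 3 * painleveSixRHS α₀ β₀ γ₀ δ₀ x y y' := by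
  rw [painleveSixRescaledRHS, painleveSixRHS, ← mul_sub_one, ← mul_sub]
  simp only [div_eq_mul_inv, mul_inv, mul_pow]
  field_simp

theorem painleveSixRescaledRHS_zero {a c : ℂ} (hc : c ≠ 0) :
    painleveSixRescaledRHS α₀ β₀ γ₀ δ₀ 0 a c (-c) =
      3 / 2 * c + α₀ * c ^ 3 / (a ^ 2 * (a - 1) ^ 2) := by
  simp only [painleveSixRescaledRHS, zero_mul, sub_zero, zero_pow two_ne_zero, mul_zero,
    zero_div, add_zero]
  field_simp
  ring

theorem continuousAt_painleveSixRescaledRHS {a c : ℂ} (ha0 : a ≠ 0) (ha1 : a ≠ 1)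
    (hc : c ≠ 0) :
    ContinuousAt (fun p : ℂ × ℂ × ℂ × ℂ =>
      painleveSixRescaledRHS α₀ β₀ γ₀ δ₀ p.1 p.2.1 p.2.2.1 p.2.2.2) (0, a, c, -c) := by
  have ha1' : a - 1 ≠ 0 := sub_ne_zero.mpr ha1
  unfold painleveSixRescaledRHS
  fun_prop (disch := simp [*])

variable {α₀ β₀ γ₀ δ₀}

theorem painleveSix_two_mul_mul_residue_sq {a c : ℂ} {h y : ℂ → ℂ}
    (ha0 : a ≠ 0) (ha1 : a ≠ 1) (hc : c ≠ 0) (hh : AnalyticAt ℂ h a)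
    (hy : ∀ x, y x = c / (x - a) + h x)
    (hP6 : ∀ᶠ x in 𝓝[≠] a,
      deriv (deriv y) x = painleveSixRHS α₀ β₀ γ₀ δ₀ x (y x) (deriv y x)) :
    2 * α₀ * c ^ 2 = a ^ 2 * (a - 1) ^ 2 := by
  obtain rfl : y = fun x => c / (x - a) ^ 1 + h x := funext fun x => by rw [hy, pow_one]
  have hd1 := deriv_div_sub_pow_add_eventuallyEq c 1 hh
  have hd2 := hd1.nhdsNE_deriv.trans (deriv_div_sub_pow_add_eventuallyEq _ 2 hh.deriv)
  have hY : Tendsto (fun x => (x - a) * (c / (x - a) ^ 1 + h x)) (𝓝[≠] a) (𝓝 c) := by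
    simpa only [pow_one] using tendsto_sub_pow_mul_div_sub_pow_add one_ne_zero hh.continuousAt
  have hV : Tendsto (fun x => (x - a) ^ 2 * deriv (fun z => c / (z - a) ^ 1 + h z) x)
      (𝓝[≠] a) (𝓝 (-c)) := by
    refine (tendsto_sub_pow_mul_div_sub_pow_add two_ne_zero hh.deriv.continuousAt).congr' ?_
    filter_upwards [hd1] with x hx
    rw [hx]
    norm_num
  have hW : Tendsto (fun x => (x - a) ^ 3 * deriv (deriv (fun z => c / (z - a) ^ 1 + h z)) x)
      (𝓝[≠] a) (𝓝 (2 * c)) := by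
    refine (tendsto_sub_pow_mul_div_sub_pow_add three_ne_zero
      hh.deriv.deriv.continuousAt).congr' ?_
    filter_upwards [hd2] with x hx
    rw [hx]
    norm_num
  have hR : Tendsto (fun x => (x - a) ^ 3 * deriv (deriv (fun z => c / (z - a) ^ 1 + h z)) x)
      (𝓝[≠] a) (𝓝 (3 / 2 * c + α₀ * c ^ 3 / (a ^ 2 * (a - 1) ^ 2))) := by
    have hx : Tendsto (fun x : ℂ => x) (𝓝[≠] a) (𝓝 a) := nhdsWithin_le_nhds
    have ht : Tendsto (fun x : ℂ => x - a) (𝓝[≠] a) (𝓝 0) := by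
      simpa using hx.sub_const a
    rw [← painleveSixRescaledRHS_zero α₀ β₀ γ₀ δ₀ hc]
    refine ((continuousAt_painleveSixRescaledRHS α₀ β₀ γ₀ δ₀ ha0 ha1 hc).tendsto.comp
      (ht.prodMk_nhds (hx.prodMk_nhds (hY.prodMk_nhds hV)))).congr' ?_
    filter_upwards [hP6, self_mem_nhdsWithin] with x hP6x hxa
    rw [Function.comp_apply, hP6x, painleveSixRescaledRHS_mul _ _ _ _ (sub_ne_zero.mpr hxa)]
  have hlim := tendsto_nhds_unique hW hR
  have hA : a ^ 2 * (a - 1) ^ 2 ≠ 0 := by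
    have := sub_ne_zero.mpr ha1
    positivity
  field_simp at hlim
  linear_combination -hlim

end PainleveSix

theorem stmt5_general (a cm1 δ : ℂ) (ha0 : a ≠ 0) (ha1 : a ≠ 1)
    (hδ : δ ≠ 1 / 2) (hc : cm1 ≠ 0)
    (α₀ β₀ γ₀ δ₀ : ℂ)
    (hα₀ : α₀ = 2 * (δ - 1 / 2) ^ 2)
    (h : ℂ → ℂ) (hh : AnalyticAt ℂ h a)
    (y : ℂ → ℂ) (hy : ∀ x, y x = cm1 / (x - a) + h x)
    (hP6 : ∀ᶠ x in 𝓝[≠] a,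
      deriv (deriv y) x =
        (1 / 2) * (1 / y x + 1 / (y x - 1) + 1 / (y x - x)) * (deriv y x) ^ 2
          - (1 / x + 1 / (x - 1) + 1 / (y x - x)) * deriv y x
          + (y x * (y x - 1) * (y x - x)) / (x ^ 2 * (x - 1) ^ 2) *
            (α₀ + β₀ * x / (y x) ^ 2 + γ₀ * (x - 1) / (y x - 1) ^ 2
              + δ₀ * (x * (x - 1)) / (y x - x) ^ 2)) :
    cm1 = a * (a - 1) / (2 * (δ - 1 / 2)) ∨
      cm1 = -(a * (a - 1) / (2 * (δ - 1 / 2))) := by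
  have hres := painleveSix_two_mul_mul_residue_sq ha0 ha1 hc hh hy hP6
  subst hα₀
  have hδ' : 2 * (δ - 1 / 2) ≠ 0 := mul_ne_zero two_ne_zero (sub_ne_zero.mpr hδ)
  refine sq_eq_sq_iff_eq_or_eq_neg.mp ?_
  rw [div_pow, eq_div_iff (pow_ne_zero 2 hδ')]
  linear_combination hres

/-- At a simple movable pole x = a of a solution of the sixth Painlevé equation
(with δ ≠ 1/2), the leading Laurent coefficient is cm1 = σ a(a−1)/(2(δ−1/2)),
σ = ±1. -/
theorem stmt5 (a cm1 c0 δ α₁ α₂ α₃ : ℂ) (ha0 : a ≠ 0) (ha1 : a ≠ 1)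
    (hδ : δ ≠ 1 / 2) (hc : cm1 ≠ 0)
    (α₀ β₀ γ₀ δ₀ : ℂ)
    (hα₀ : α₀ = 2 * (δ - 1 / 2) ^ 2) (hβ₀ : β₀ = -2 * α₁ ^ 2)
    (hγ₀ : γ₀ = 2 * α₃ ^ 2) (hδ₀ : δ₀ = -2 * (α₂ ^ 2 - 1 / 4))
    (h : ℂ → ℂ) (hh : AnalyticAt ℂ h a) (hh0 : h a = c0)
    (y : ℂ → ℂ) (hy : ∀ x, y x = cm1 / (x - a) + h x)
    (hP6 : ∀ᶠ x in 𝓝[≠] a,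
      deriv (deriv y) x =
        (1 / 2) * (1 / y x + 1 / (y x - 1) + 1 / (y x - x)) * (deriv y x) ^ 2
          - (1 / x + 1 / (x - 1) + 1 / (y x - x)) * deriv y x
          + (y x * (y x - 1) * (y x - x)) / (x ^ 2 * (x - 1) ^ 2) *
            (α₀ + β₀ * x / (y x) ^ 2 + γ₀ * (x - 1) / (y x - 1) ^ 2
              + δ₀ * (x * (x - 1)) / (y x - x) ^ 2)) :
    cm1 = a * (a - 1) / (2 * (δ - 1 / 2)) ∨
      cm1 = -(a * (a - 1) / (2 * (δ - 1 / 2))) :=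
  stmt5_general a cm1 δ ha0 ha1 hδ hc α₀ β₀ γ₀ δ₀ hα₀ h hh y hy hP6
end
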